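/- Let s ∈ ℝ, and suppose either p ∈ (0,∞), q ∈ (0,∞) and τ ∈ (1/p, ∞), or q = ∞ and τ ∈ [1/p, ∞). Then there exists a constant C > 0 (depending only on n, p, q, τ) such that for every sequence t = {t_Q} indexed by dyadic cubes, ‖t‖_{ḟ^{s,τ}_{p,q}} ≤ C ‖t‖_{ḟ^{s+n(τ-1/p)}_{∞,∞}}. Consequently the two sequence norms are equivalent. -/

import Mathlib

/-!
At a point `x ∈ P` the only nonzero terms of the inner `ℓ^q`-sum of `‖t‖_{ḟ^{s,τ}_{p,q}}` come
from the dyadic cubes `Q ∋ x`, and there is one of them in each generation `j ≥ j_P`. With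
`σ = s + n(τ - 1/p)`, each term is at most `‖t‖_{ḟ^σ_{∞,∞}} |Q|^{τ-1/p}
= ‖t‖_{ḟ^σ_{∞,∞}} |P|^{τ-1/p} r^{j-j_P}` where `r = 2^{-n(τ-1/p)}`. Integrating over `P` then
gives the upper bound with `C = ‖(r^m)_{m ∈ ℕ}‖_{ℓ^q}`, which is finite exactly when `r < 1`,
or when `q = ∞` and `r ≤ 1`. The reverse inequality comes from keeping only the term `Q = P`.
-/

open MeasureTheory ENNReal

/-- A dyadic cube `Q_{jk} = 2^{-j}([0,1)^n + k)` in `ℝⁿ`, recorded by its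
generation `j ∈ ℤ` and position `k ∈ ℤⁿ`. -/
structure DyadicCube (n : ℕ) where
  j : ℤ
  k : Fin n → ℤ

namespace DyadicCube

/-- The dyadic cube as a subset of `ℝⁿ`. -/
def toSet {n : ℕ} (Q : DyadicCube n) : Set (Fin n → ℝ) :=
  {x | ∀ i, (Q.k i : ℝ) * (2 : ℝ) ^ (-Q.j) ≤ x i ∧
        x i < ((Q.k i : ℝ) + 1) * (2 : ℝ) ^ (-Q.j)}

/-- The Lebesgue measure `|Q| = 2^{-jn}` of a dyadic cube, as an element of `ℝ≥0∞`. -/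
noncomputable def vol {n : ℕ} (Q : DyadicCube n) : ℝ≥0∞ :=
  (2 : ℝ≥0∞) ^ (-(Q.j : ℝ) * n)

/-- The characteristic function `χ_Q`, with values in `ℝ≥0∞`. -/
noncomputable def ind {n : ℕ} (Q : DyadicCube n) (x : Fin n → ℝ) : ℝ≥0∞ :=
  Q.toSet.indicator (fun _ => (1 : ℝ≥0∞)) x

end DyadicCube

open DyadicCube

/-- The coefficient `|Q|^{-s/n - 1/2}`. -/
noncomputable def coeff {n : ℕ} (s : ℝ) (Q : DyadicCube n) : ℝ≥0∞ :=
  Q.vol ^ (-(s / (n : ℝ)) - 1 / 2)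

/-- The `ℓ^q`-norm `(Σ_i a_i^q)^{1/q}` of a family of extended nonnegative reals,
with the usual modification (`sup`) when `q = ∞`. -/
noncomputable def lqSum {ι : Type*} (q : ℝ≥0∞) (a : ι → ℝ≥0∞) : ℝ≥0∞ :=
  if q = ∞ then ⨆ i, a i else (∑' i, a i ^ q.toReal) ^ (1 / q.toReal)

/-- The `L^p`-norm `(∫_A g^p dx)^{1/p}` over a set `A ⊆ ℝⁿ`, with the usual
modification (`sup` over `x ∈ A`) when `p = ∞`. -/
noncomputable def lpIntOn {n : ℕ} (p : ℝ≥0∞) (A : Set (Fin n → ℝ))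
    (g : (Fin n → ℝ) → ℝ≥0∞) : ℝ≥0∞ :=
  if p = ∞ then ⨆ x ∈ A, g x
  else (∫⁻ x in A, g x ^ p.toReal) ^ (1 / p.toReal)

/-- The Triebel–Lizorkin-type sequence norm
`‖t‖_{ḟ^{s,τ}_{p,q}} = sup_P |P|^{-τ} ( ∫_P ( Σ_{Q ⊆ P} [|Q|^{-s/n-1/2} |t_Q| χ_Q(x)]^q )^{p/q} dx )^{1/p}`,
with the usual modifications when `p = ∞` or `q = ∞`. -/
noncomputable def fNorm (n : ℕ) (s τ : ℝ) (p q : ℝ≥0∞) (t : DyadicCube n → ℂ) : ℝ≥0∞ :=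
  ⨆ P : DyadicCube n, P.vol ^ (-τ) *
    lpIntOn p P.toSet fun x =>
      lqSum q fun Q : {Q : DyadicCube n // Q.toSet ⊆ P.toSet} =>
        coeff s Q.1 * ‖t Q.1‖₊ * ind Q.1 x

/-- The Besov-type sequence norm
`‖t‖_{ḃ^{s,τ}_{p,q}} = sup_P |P|^{-τ} ( Σ_{j ≥ j_P} ( ∫_P [ Σ_{Q ⊆ P, ℓ(Q)=2^{-j}} |Q|^{-s/n-1/2} |t_Q| χ_Q(x) ]^p dx )^{q/p} )^{1/q}`,
with the usual modifications when `p = ∞` or `q = ∞`. -/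
noncomputable def bNorm (n : ℕ) (s τ : ℝ) (p q : ℝ≥0∞) (t : DyadicCube n → ℂ) : ℝ≥0∞ :=
  ⨆ P : DyadicCube n, P.vol ^ (-τ) *
    lqSum q fun j : {j : ℤ // P.j ≤ j} =>
      lpIntOn p P.toSet fun x =>
        ∑' Q : {Q : DyadicCube n // Q.toSet ⊆ P.toSet ∧ Q.j = j.1},
          coeff s Q.1 * ‖t Q.1‖₊ * ind Q.1 x

/-- The `ḟ^{σ}_{∞,∞} = ḃ^{σ}_{∞,∞}` sequence norm `sup_Q |Q|^{-σ/n - 1/2} |t_Q|`. -/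
noncomputable def supNorm (n : ℕ) (σ : ℝ) (t : DyadicCube n → ℂ) : ℝ≥0∞ :=
  ⨆ Q : DyadicCube n, coeff σ Q * ‖t Q‖₊

/-- The test sequence with `t_{R_j} = |R_j|^{s/n + 1/2 + τ - 1/p}` for
`R_j = [0,2^{-j})^n` (the dyadic cube with `k = 0`), and `t_Q = 0` otherwise. -/
noncomputable def testSeq (n : ℕ) (s τ p : ℝ) : DyadicCube n → ℂ := fun Q =>
  if Q.k = 0 then
    ((((2 : ℝ) ^ (-(Q.j : ℝ) * n)) ^ (s / n + 1 / 2 + τ - 1 / p) : ℝ) : ℂ)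
  else 0

/-- The cube `R_j = [0, 2^{-j})^n`. -/
def Rcube (n : ℕ) (j : ℤ) : DyadicCube n := ⟨j, 0⟩

open Set

namespace DyadicCube

variable {n : ℕ}

lemma toSet_eq_pi (Q : DyadicCube n) :
    Q.toSet = univ.pi fun i => Ico ((Q.k i : ℝ) * 2 ^ (-Q.j)) ((Q.k i + 1) * 2 ^ (-Q.j)) := by
  ext x
  simp [toSet]

lemma measurableSet_toSet (Q : DyadicCube n) : MeasurableSet Q.toSet := by
  rw [toSet_eq_pi]
  exact .univ_pi fun _ => measurableSet_Ico

lemma volume_toSet (Q : DyadicCube n) : volume Q.toSet = Q.vol := by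
  have hside : ENNReal.ofReal ((2 : ℝ) ^ (-Q.j)) = (2 : ℝ≥0∞) ^ (-(Q.j : ℝ)) := by
    rw [← Real.rpow_intCast, ← ENNReal.ofReal_rpow_of_pos two_pos]
    norm_num
  simp only [toSet_eq_pi, volume_pi_pi, Real.volume_Ico, add_mul, one_mul, add_sub_cancel_left,
    hside, Finset.prod_const, Finset.card_univ, Fintype.card_fin, vol,
    ← ENNReal.rpow_natCast, ← ENNReal.rpow_mul]

lemma vol_ne_zero (Q : DyadicCube n) : Q.vol ≠ 0 := by
  simp [vol, ENNReal.rpow_eq_zero_iff]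

lemma vol_ne_top (Q : DyadicCube n) : Q.vol ≠ ∞ := by
  simp [vol, ENNReal.rpow_eq_top_iff]

lemma mem_toSet_iff_floor {Q : DyadicCube n} {x : Fin n → ℝ} :
    x ∈ Q.toSet ↔ ∀ i, ⌊x i * 2 ^ Q.j⌋ = Q.k i := by
  have h2 : (0 : ℝ) < 2 ^ Q.j := by positivity
  simp only [toSet, mem_ofPred_eq, Int.floor_eq_iff, zpow_neg, ← div_eq_mul_inv,
    div_le_iff₀ h2, lt_div_iff₀ h2]

lemma eq_of_mem_of_j_eq {Q Q' : DyadicCube n} {x : Fin n → ℝ} (hj : Q.j = Q'.j)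
    (hx : x ∈ Q.toSet) (hx' : x ∈ Q'.toSet) : Q = Q' := by
  rw [mem_toSet_iff_floor] at hx hx'
  obtain ⟨j, k⟩ := Q
  obtain ⟨j', k'⟩ := Q'
  subst hj
  congr
  funext i
  exact (hx i).symm.trans (hx' i)

lemma j_le_of_toSet_subset (hn : n ≠ 0) {P Q : DyadicCube n} (h : Q.toSet ⊆ P.toSet) :
    P.j ≤ Q.j := by
  have hvol := measure_mono (μ := volume) h
  rw [volume_toSet, volume_toSet, vol, vol] at hvol
  by_contra! hlt
  have hnR : (0 : ℝ) < n := by positivity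
  have hjR : (Q.j : ℝ) < P.j := by exact_mod_cast hlt
  refine hvol.not_gt (ENNReal.rpow_lt_rpow_of_exponent_lt (by norm_num) (by norm_num) ?_)
  nlinarith

lemma vol_rpow_of_j_eq_add {P Q : DyadicCube n} {m : ℕ} (h : Q.j = P.j + m) (a : ℝ) :
    Q.vol ^ a = P.vol ^ a * ((2 : ℝ≥0∞) ^ (-(n * a))) ^ m := by
  simp only [vol, ← ENNReal.rpow_mul, ← ENNReal.rpow_natCast,
    ← ENNReal.rpow_add _ _ two_ne_zero ENNReal.ofNat_ne_top, h]
  push_cast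
  ring_nf

lemma vol_rpow_neg_mul_rpow_sub_mul_rpow (Q : DyadicCube n) (τ b : ℝ) :
    Q.vol ^ (-τ) * Q.vol ^ (τ - b) * Q.vol ^ b = 1 := by
  rw [← ENNReal.rpow_add _ _ Q.vol_ne_zero Q.vol_ne_top,
    ← ENNReal.rpow_add _ _ Q.vol_ne_zero Q.vol_ne_top]
  ring_nf
  exact ENNReal.rpow_zero

end DyadicCube

lemma coeff_eq_coeff_mul_vol_rpow {n : ℕ} (hn : n ≠ 0) (s a : ℝ) (Q : DyadicCube n) :
    coeff s Q = coeff (s + n * a) Q * Q.vol ^ a := by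
  rw [coeff, coeff, ← ENNReal.rpow_add _ _ Q.vol_ne_zero Q.vol_ne_top]
  congr 1
  field_simp
  ring

section lqSum

variable {ι κ : Type*} {q : ℝ≥0∞}

lemma le_lqSum (hq : q ≠ 0) (a : ι → ℝ≥0∞) (i : ι) : a i ≤ lqSum q a := by
  unfold lqSum
  split_ifs with hqtop
  · exact le_iSup a i
  · have hqr : 0 < q.toReal := ENNReal.toReal_pos hq hqtop
    calc a i = (a i ^ q.toReal) ^ (1 / q.toReal) := by
          rw [← ENNReal.rpow_mul, mul_one_div_cancel hqr.ne', ENNReal.rpow_one]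
      _ ≤ (∑' j, a j ^ q.toReal) ^ (1 / q.toReal) := by
          gcongr
          exact ENNReal.le_tsum i

lemma lqSum_const_mul (hq : q ≠ 0) (c : ℝ≥0∞) (a : ι → ℝ≥0∞) :
    lqSum q (fun i => c * a i) = c * lqSum q a := by
  unfold lqSum
  split_ifs with hqtop
  · exact (ENNReal.mul_iSup ..).symm
  · have hqr : 0 < q.toReal := ENNReal.toReal_pos hq hqtop
    simp only [ENNReal.mul_rpow_of_nonneg _ _ hqr.le, ENNReal.tsum_mul_left]
    rw [ENNReal.mul_rpow_of_nonneg _ _ (by positivity), ← ENNReal.rpow_mul,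
      mul_one_div_cancel hqr.ne', ENNReal.rpow_one]

lemma lqSum_le_of_injOn (hq : q ≠ 0) {a : ι → ℝ≥0∞} {b : κ → ℝ≥0∞} {φ : ι → κ}
    (hφ : InjOn φ (Function.support a)) (hab : ∀ i, a i ≤ b (φ i)) : lqSum q a ≤ lqSum q b := by
  unfold lqSum
  split_ifs with hqtop
  · exact iSup_le fun i => (hab i).trans (le_iSup b (φ i))
  · have hqr : 0 < q.toReal := ENNReal.toReal_pos hq hqtop
    gcongr
    have hsupp : Function.support (fun i => a i ^ q.toReal) ⊆ Function.support a := by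
      intro i hi h0
      exact hi (by simp [h0, hqr])
    rw [← tsum_subtype_eq_of_support_subset hsupp]
    calc ∑' i : Function.support a, a i ^ q.toReal
        ≤ ∑' i : Function.support a, b (φ i) ^ q.toReal :=
          ENNReal.tsum_le_tsum fun i => by gcongr; exact hab i
      _ ≤ ∑' k, b k ^ q.toReal :=
          ENNReal.tsum_comp_le_tsum_of_injective (hφ.injective) fun k => b k ^ q.toReal

lemma lqSum_geometric_ne_top {r : ℝ≥0∞} (hr : r ≤ 1) (hrq : q ≠ ∞ → r < 1) :
    lqSum q (fun m : ℕ => r ^ m) ≠ ∞ := by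
  unfold lqSum
  split_ifs with hqtop
  · exact ne_top_of_le_ne_top ENNReal.one_ne_top (iSup_le fun m => pow_le_one₀ bot_le hr)
  · rcases (ENNReal.toReal_nonneg (a := q)).eq_or_lt with hq0 | hqr
    · simp [← hq0]
    refine ENNReal.rpow_ne_top_of_nonneg (by positivity) ?_
    simp only [← ENNReal.rpow_natCast, ← ENNReal.rpow_mul, mul_comm _ q.toReal]
    simp only [ENNReal.rpow_mul, ENNReal.rpow_natCast, ENNReal.tsum_geometric]
    exact ENNReal.inv_ne_top.mpr (tsub_pos_of_lt
      (ENNReal.rpow_lt_one (hrq hqtop) hqr)).ne'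

end lqSum

section lpIntOn

variable {n : ℕ} {p : ℝ≥0∞} {A : Set (Fin n → ℝ)}

lemma lpIntOn_mono (hA : MeasurableSet A) {g h : (Fin n → ℝ) → ℝ≥0∞}
    (hgh : ∀ x ∈ A, g x ≤ h x) : lpIntOn p A g ≤ lpIntOn p A h := by
  unfold lpIntOn
  split_ifs
  · exact iSup₂_mono hgh
  · gcongr ?_ ^ _
    exact setLIntegral_mono' hA fun x hx => by gcongr; exact hgh x hx

lemma lpIntOn_const (hp : p ≠ 0) (hp' : p ≠ ∞) (A : Set (Fin n → ℝ)) (c : ℝ≥0∞) :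
    lpIntOn p A (fun _ => c) = c * volume A ^ (1 / p.toReal) := by
  have hpr : 0 < p.toReal := ENNReal.toReal_pos hp hp'
  rw [lpIntOn, if_neg hp', setLIntegral_const, ENNReal.mul_rpow_of_nonneg _ _ (by positivity),
    ← ENNReal.rpow_mul, mul_one_div_cancel hpr.ne', ENNReal.rpow_one]

end lpIntOn

noncomputable def localLqSum {n : ℕ} (s : ℝ) (q : ℝ≥0∞) (t : DyadicCube n → ℂ)
    (P : DyadicCube n) (x : Fin n → ℝ) : ℝ≥0∞ :=
  lqSum q fun Q : {Q : DyadicCube n // Q.toSet ⊆ P.toSet} => coeff s Q.1 * ‖t Q.1‖₊ * ind Q.1 x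

section SequenceNorms

variable {n : ℕ} (s τ : ℝ) {p q : ℝ≥0∞} (t : DyadicCube n → ℂ)

lemma fNorm_eq_iSup_localLqSum :
    fNorm n s τ p q t =
      ⨆ P : DyadicCube n, P.vol ^ (-τ) * lpIntOn p P.toSet (localLqSum s q t P) :=
  rfl

lemma coeff_mul_nnnorm_le_supNorm (hn : n ≠ 0) (a : ℝ) (Q : DyadicCube n) :
    coeff s Q * ‖t Q‖₊ ≤ supNorm n (s + n * a) t * Q.vol ^ a := by
  rw [coeff_eq_coeff_mul_vol_rpow hn s a, mul_right_comm]
  gcongr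
  exact le_iSup (fun Q => coeff (s + n * a) Q * ‖t Q‖₊) Q

lemma localLqSum_le (hn : n ≠ 0) (hq : q ≠ 0) (a : ℝ) (P : DyadicCube n) (x : Fin n → ℝ) :
    localLqSum s q t P x ≤
      lqSum q (fun m : ℕ => ((2 : ℝ≥0∞) ^ (-(n * a))) ^ m) * supNorm n (s + n * a) t *
        P.vol ^ a := by
  set r : ℝ≥0∞ := 2 ^ (-(n * a))
  set M := supNorm n (s + n * a) t
  calc localLqSum s q t P x ≤ lqSum q (fun m : ℕ => M * P.vol ^ a * r ^ m) := by
        refine lqSum_le_of_injOn hq (φ := fun Q => (Q.1.j - P.j).toNat) ?_ fun Q => ?_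
        · intro Q hQ Q' hQ' hjj
          have hxQ := mem_of_indicator_ne_zero (right_ne_zero_of_mul hQ)
          have hxQ' := mem_of_indicator_ne_zero (right_ne_zero_of_mul hQ')
          have hPQ := j_le_of_toSet_subset hn Q.2
          have hPQ' := j_le_of_toSet_subset hn Q'.2
          exact Subtype.ext (eq_of_mem_of_j_eq (by simp only at hjj; omega) hxQ hxQ')
        · obtain ⟨m, hm⟩ := Int.le.dest (j_le_of_toSet_subset hn Q.2)
          calc coeff s Q.1 * ‖t Q.1‖₊ * ind Q.1 x ≤ coeff s Q.1 * ‖t Q.1‖₊ :=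
                mul_le_of_le_one_right' (indicator_apply_le' (fun _ => le_rfl) fun _ => zero_le_one)
            _ ≤ M * Q.1.vol ^ a := coeff_mul_nnnorm_le_supNorm s t hn a Q.1
            _ = M * P.vol ^ a * r ^ (Q.1.j - P.j).toNat := by
                rw [vol_rpow_of_j_eq_add hm.symm, ← hm, add_sub_cancel_left, Int.toNat_natCast,
                  mul_assoc]
    _ = lqSum q (fun m : ℕ => r ^ m) * M * P.vol ^ a := by
        rw [lqSum_const_mul hq]
        ring

lemma fNorm_le (hn : n ≠ 0) (hp : p ≠ 0) (hp' : p ≠ ∞) (hq : q ≠ 0) :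
    fNorm n s τ p q t ≤
      lqSum q (fun m : ℕ => ((2 : ℝ≥0∞) ^ (-(n * (τ - 1 / p.toReal)))) ^ m) *
        supNorm n (s + n * (τ - 1 / p.toReal)) t := by
  set K := lqSum q (fun m : ℕ => ((2 : ℝ≥0∞) ^ (-(n * (τ - 1 / p.toReal)))) ^ m)
  set M := supNorm n (s + n * (τ - 1 / p.toReal)) t
  rw [fNorm_eq_iSup_localLqSum]
  refine iSup_le fun P => ?_
  calc P.vol ^ (-τ) * lpIntOn p P.toSet (localLqSum s q t P)
      ≤ P.vol ^ (-τ) * lpIntOn p P.toSet (fun _ => K * M * P.vol ^ (τ - 1 / p.toReal)) := by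
        gcongr
        exact lpIntOn_mono P.measurableSet_toSet fun x _ => localLqSum_le s t hn hq _ P x
    _ = K * M * (P.vol ^ (-τ) * P.vol ^ (τ - 1 / p.toReal) * P.vol ^ (1 / p.toReal)) := by
        rw [lpIntOn_const hp hp', volume_toSet]
        ring
    _ = K * M := by rw [vol_rpow_neg_mul_rpow_sub_mul_rpow, mul_one]

lemma supNorm_le_fNorm (hn : n ≠ 0) (hp : p ≠ 0) (hp' : p ≠ ∞) (hq : q ≠ 0) :
    supNorm n (s + n * (τ - 1 / p.toReal)) t ≤ fNorm n s τ p q t := by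
  rw [fNorm_eq_iSup_localLqSum]
  refine iSup_le fun P => le_iSup_of_le P ?_
  have hP : ∀ x ∈ P.toSet, coeff s P * ‖t P‖₊ ≤ localLqSum s q t P x := fun x hx =>
    calc coeff s P * ‖t P‖₊ = coeff s P * ‖t P‖₊ * ind P x := by simp [ind, hx]
      _ ≤ localLqSum s q t P x := le_lqSum hq _ (⟨P, subset_rfl⟩ : {Q // Q.toSet ⊆ P.toSet})
  calc coeff (s + n * (τ - 1 / p.toReal)) P * ‖t P‖₊
      = coeff (s + n * (τ - 1 / p.toReal)) P * ‖t P‖₊ *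
          (P.vol ^ (-τ) * P.vol ^ (τ - 1 / p.toReal) * P.vol ^ (1 / p.toReal)) := by
        rw [vol_rpow_neg_mul_rpow_sub_mul_rpow, mul_one]
    _ = P.vol ^ (-τ) * lpIntOn p P.toSet (fun _ => coeff s P * ‖t P‖₊) := by
        rw [lpIntOn_const hp hp', volume_toSet,
          coeff_eq_coeff_mul_vol_rpow hn s (τ - 1 / p.toReal)]
        ring
    _ ≤ P.vol ^ (-τ) * lpIntOn p P.toSet (localLqSum s q t P) := by
        gcongr
        exact lpIntOn_mono P.measurableSet_toSet hP

end SequenceNorms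

/-- if `p ∈ (0,∞)` and either `q ∈ (0,∞)` with `τ ∈ (1/p,∞)`, or `q = ∞`
with `τ ∈ [1/p,∞)`, then there is a constant `C ∈ (0,∞)` with
`‖t‖_{ḟ^{s,τ}_{p,q}} ≤ C ‖t‖_{ḟ^{s+n(τ-1/p)}_{∞,∞}}` for all sequences `t`;
together with the trivial reverse inequality the two norms are equivalent. -/
theorem stmt1 (n : ℕ) (hn : 0 < n) (s τ : ℝ) (p q : ℝ≥0∞)
    (hp : 0 < p) (hp' : p ≠ ∞)
    (h : (q ≠ ∞ ∧ 0 < q ∧ 1 / p.toReal < τ) ∨ (q = ∞ ∧ 1 / p.toReal ≤ τ)) :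
    ∃ C : ℝ≥0∞, 0 < C ∧ C ≠ ∞ ∧ ∀ t : DyadicCube n → ℂ,
      fNorm n s τ p q t ≤ C * supNorm n (s + n * (τ - 1 / p.toReal)) t ∧
      supNorm n (s + n * (τ - 1 / p.toReal)) t ≤ fNorm n s τ p q t := by
  have hq : q ≠ 0 := by
    rcases h with ⟨-, hq, -⟩ | ⟨rfl, -⟩
    exacts [hq.ne', top_ne_zero]
  have hnR : (0 : ℝ) < n := by exact_mod_cast hn
  set r : ℝ≥0∞ := 2 ^ (-(n * (τ - 1 / p.toReal)))
  have hr : r ≤ 1 := by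
    have hτ : 1 / p.toReal ≤ τ := by rcases h with ⟨-, -, hτ⟩ | ⟨-, hτ⟩ <;> linarith
    calc r ≤ 2 ^ (0 : ℝ) := ENNReal.rpow_le_rpow_of_exponent_le (by norm_num) (by nlinarith)
      _ = 1 := ENNReal.rpow_zero
  have hrq : q ≠ ∞ → r < 1 := fun hqtop => by
    have hτ : 1 / p.toReal < τ := by tauto
    exact ENNReal.rpow_lt_one_of_one_lt_of_neg (by norm_num) (by nlinarith)
  refine ⟨lqSum q fun m : ℕ => r ^ m, ?_, lqSum_geometric_ne_top hr hrq, fun t =>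
    ⟨fNorm_le s τ t hn.ne' hp.ne' hp' hq, supNorm_le_fNorm s τ t hn.ne' hp.ne' hp' hq⟩⟩
  exact (pow_zero r ▸ zero_lt_one).trans_le (le_lqSum hq (fun m : ℕ => r ^ m) 0)
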